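/- arXiv:1006.1678 — 3 statements merged into one kernel-verified Lean document; each statement's English description precedes it below -/
import Mathlib

section
/- Let F be a complex matrix (viewed as a bounded operator) with operator norm ‖F‖₂ ≤ 1. Then ‖(I + F F*)^{-1/2} - I‖₂ ≤ (1/2)·‖F‖₂². -/
open scoped Matrix.Norms.L2Operator ComplexOrder
open Matrix

/-- The positive semidefinite square root of a positive semidefinite matrix
(as defined in Mathlib of December 2024, since removed). -/
noncomputable def Matrix.PosSemidef.sqrt {n : Type*} [Fintype n] [DecidableEq n] {𝕜 : Type*}
    [RCLike 𝕜] {A : Matrix n n 𝕜} (hA : A.PosSemidef) : Matrix n n 𝕜 :=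
  hA.1.eigenvectorUnitary.1 * diagonal ((↑) ∘ (√·) ∘ hA.1.eigenvalues) *
  (star hA.1.eigenvectorUnitary : Matrix n n 𝕜)

/-!
By the functional calculus, `(I + F Fᴴ)^{-1/2} - I = g (I + F Fᴴ)` with `g t = t^{-1/2} - 1`, so its
norm is the maximum of `|g|` on the spectrum, which lies in `[1, 1 + ‖F‖²]` because
`‖F Fᴴ‖ = ‖F‖²`. On `[1, ∞)` we have `|g t| ≤ (t - 1) / 2`: with `u = √t ≥ 1` this is
`(u - 1) / u ≤ (u - 1) (u + 1) / 2`, i.e. `2 ≤ u (u + 1)`.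
-/

lemma abs_inv_sqrt_sub_one_le {t : ℝ} (ht : 1 ≤ t) : |(√t)⁻¹ - 1| ≤ (t - 1) / 2 := by
  have hu : 1 ≤ √t := Real.one_le_sqrt.mpr ht
  have hsq : √t ^ 2 = t := Real.sq_sqrt (by linarith)
  have hinv : (√t)⁻¹ ≤ 1 := inv_le_one_of_one_le₀ hu
  have hmul : (√t)⁻¹ * √t = 1 := inv_mul_cancel₀ (by positivity)
  rw [abs_of_nonpos (by linarith)]
  nlinarith [mul_nonneg (sub_nonneg.2 hu) (sub_nonneg.2 hinv)]

lemma norm_ringInverse_cfc_sqrt_sub_one_le {A : Type*} [CStarAlgebra A] {a : A}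
    (ha : IsSelfAdjoint a) (h1 : ∀ x ∈ spectrum ℝ a, 1 ≤ x) :
    ‖Ring.inverse (cfc Real.sqrt a) - 1‖ ≤ ‖a - 1‖ / 2 := by
  nontriviality A
  have hsqrt : ∀ x ∈ spectrum ℝ a, √x ≠ 0 := fun x hx ↦ by
    have := Real.one_le_sqrt.mpr (h1 x hx); positivity
  have hcfc : Ring.inverse (cfc Real.sqrt a) - 1 = cfc (fun x ↦ (√x)⁻¹ - 1) a := by
    rw [cfc_sub _ _ a, cfc_inv Real.sqrt a hsqrt, cfc_const_one ℝ a]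
  rw [hcfc]
  refine norm_cfc_le (by positivity) fun x hx ↦ ?_
  have hx1 : x - 1 ∈ spectrum ℝ (a - 1) := by
    rw [← map_one (algebraMap ℝ A), ← spectrum.sub_singleton_eq]
    exact Set.sub_mem_sub hx rfl
  calc ‖(√x)⁻¹ - 1‖ ≤ (x - 1) / 2 := abs_inv_sqrt_sub_one_le (h1 x hx)
    _ ≤ ‖a - 1‖ / 2 := by
      gcongr
      exact (le_abs_self _).trans (spectrum.norm_le_norm_of_mem hx1)

lemma Matrix.PosSemidef.sqrt_eq_cfc {n : Type*} [Fintype n] [DecidableEq n] {𝕜 : Type*}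
    [RCLike 𝕜] {A : Matrix n n 𝕜} (hA : A.PosSemidef) : hA.sqrt = cfc Real.sqrt A := by
  rw [hA.1.cfc_eq]
  rfl

lemma Matrix.PosSemidef.one_le_of_mem_spectrum_one_add {n : Type*} [Fintype n] [DecidableEq n]
    {𝕜 : Type*} [RCLike 𝕜] {B : Matrix n n 𝕜} (hB : B.PosSemidef) {x : ℝ}
    (hx : x ∈ spectrum ℝ (1 + B)) : 1 ≤ x := by
  rw [← map_one (algebraMap ℝ (Matrix n n 𝕜)), ← spectrum.singleton_add_eq] at hx
  obtain ⟨_, rfl, y, hy, rfl⟩ := hx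
  obtain ⟨i, rfl⟩ := hB.1.spectrum_real_eq_range_eigenvalues ▸ hy
  simpa using hB.eigenvalues_nonneg i

theorem stmt_4_general {m s : ℕ} (F : Matrix (Fin m) (Fin s) ℂ)
    (hA : (1 + F * Fᴴ).PosSemidef) :
    ‖hA.sqrt⁻¹ - 1‖ ≤ (1 / 2) * ‖F‖ ^ 2 := by
  have hnorm : ‖(1 + F * Fᴴ) - 1‖ = ‖F‖ ^ 2 := by
    simpa [l2_opNorm_conjTranspose, sq] using l2_opNorm_conjTranspose_mul_self Fᴴ
  calc ‖hA.sqrt⁻¹ - 1‖ = ‖Ring.inverse (cfc Real.sqrt (1 + F * Fᴴ)) - 1‖ := by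
        rw [nonsing_inv_eq_ringInverse, hA.sqrt_eq_cfc]
    _ ≤ ‖(1 + F * Fᴴ) - 1‖ / 2 :=
        norm_ringInverse_cfc_sqrt_sub_one_le hA.1
          fun _ ↦ (posSemidef_self_mul_conjTranspose F).one_le_of_mem_spectrum_one_add
    _ = (1 / 2) * ‖F‖ ^ 2 := by rw [hnorm]; ring

/-- If `F` is a complex matrix with spectral (L² operator) norm `‖F‖ ≤ 1`, then
`‖(I + F Fᴴ)^{-1/2} - I‖ ≤ (1/2)·‖F‖²`, where `(I + F Fᴴ)^{1/2}` is the positive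
semidefinite square root of `I + F Fᴴ`. -/
theorem stmt_4 {m s : ℕ} (F : Matrix (Fin m) (Fin s) ℂ)
    (hF : ‖F‖ ≤ 1) (hA : (1 + F * Fᴴ).PosSemidef) :
    ‖hA.sqrt⁻¹ - 1‖ ≤ (1 / 2) * ‖F‖ ^ 2 :=
  stmt_4_general F hA
end

section
/- Suppose Φ̃ ∈ ℂ^{n×N} satisfies the restricted isometry property (1-δ⁻)‖Z‖₂² ≤ ‖Φ̃Z‖₂² ≤ (1+δ⁺)‖Z‖₂² for all Z supported on S ∪ S' where S, S' are disjoint with |S| ≤ s, |S'| ≤ s'. Then for all Z supported on S and Z' supported on S', |Re⟨Φ̃Z, Φ̃Z'⟩| ≤ (1/2)(δ⁺ + δ⁻)·‖Z‖₂·‖Z'‖₂. -/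
/-!
Polarization: for unit vectors `u ⟂ v` one has `‖u ± v‖² = 2`, so
`4 Re⟪Au, Av⟫ = ‖A(u + v)‖² - ‖A(u - v)‖² ≤ 2(1 + δ⁺) - 2(1 - δ⁻)`, and replacing `v` by `-v`
bounds the other side. Vectors supported on the disjoint sets `S`, `S'` are orthogonal, and the
general case follows by homogeneity.
-/

open scoped InnerProductSpace

section RestrictedIsometry

variable {𝕜 E F : Type*} [RCLike 𝕜] [SeminormedAddCommGroup F] [InnerProductSpace 𝕜 F]

theorem re_inner_ofReal_smul_ofReal_smul (r t : ℝ) (a b : F) :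
    RCLike.re ⟪(r : 𝕜) • a, (t : 𝕜) • b⟫_𝕜 = r * t * RCLike.re ⟪a, b⟫_𝕜 := by
  rw [inner_smul_real_left, inner_smul_real_right, RCLike.smul_re, RCLike.smul_re, mul_assoc]

variable [NormedAddCommGroup E] [InnerProductSpace 𝕜 E]

def RestrictedIsometryOn (A : E →ₗ[𝕜] F) (V : Set E) (δm δp : ℝ) : Prop :=
  ∀ z ∈ V, (1 - δm) * ‖z‖ ^ 2 ≤ ‖A z‖ ^ 2 ∧ ‖A z‖ ^ 2 ≤ (1 + δp) * ‖z‖ ^ 2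

namespace RestrictedIsometryOn

variable {A : E →ₗ[𝕜] F} {V : Submodule 𝕜 E} {δm δp : ℝ} {x y : E}

theorem re_inner_le_of_norm_eq_one (hA : RestrictedIsometryOn A V δm δp)
    (hx : x ∈ V) (hy : y ∈ V) (hx1 : ‖x‖ = 1) (hy1 : ‖y‖ = 1) (hxy : RCLike.re ⟪x, y⟫_𝕜 = 0) :
    RCLike.re ⟪A x, A y⟫_𝕜 ≤ (δp + δm) / 2 := by
  have hadd : ‖x + y‖ ^ 2 = 2 := by rw [norm_add_sq (𝕜 := 𝕜), hx1, hy1, hxy]; norm_num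
  have hsub : ‖x - y‖ ^ 2 = 2 := by rw [norm_sub_sq (𝕜 := 𝕜), hx1, hy1, hxy]; norm_num
  have hupper := (hA _ (V.add_mem hx hy)).2
  have hlower := (hA _ (V.sub_mem hx hy)).1
  rw [map_add, norm_add_sq (𝕜 := 𝕜), hadd] at hupper
  rw [hsub, map_sub, norm_sub_sq (𝕜 := 𝕜)] at hlower
  linarith

theorem abs_re_inner_le_of_norm_eq_one (hA : RestrictedIsometryOn A V δm δp)
    (hx : x ∈ V) (hy : y ∈ V) (hx1 : ‖x‖ = 1) (hy1 : ‖y‖ = 1) (hxy : RCLike.re ⟪x, y⟫_𝕜 = 0) :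
    |RCLike.re ⟪A x, A y⟫_𝕜| ≤ (δp + δm) / 2 := by
  have hneg := hA.re_inner_le_of_norm_eq_one hx (V.neg_mem hy) hx1 (by rwa [norm_neg])
    (by rwa [inner_neg_right, map_neg, neg_eq_zero])
  rw [map_neg, inner_neg_right, map_neg] at hneg
  exact abs_le.2 ⟨by linarith, hA.re_inner_le_of_norm_eq_one hx hy hx1 hy1 hxy⟩

theorem abs_re_inner_le (hA : RestrictedIsometryOn A V δm δp)
    (hx : x ∈ V) (hy : y ∈ V) (hxy : RCLike.re ⟪x, y⟫_𝕜 = 0) :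
    |RCLike.re ⟪A x, A y⟫_𝕜| ≤ (δp + δm) / 2 * ‖x‖ * ‖y‖ := by
  rcases eq_or_ne x 0 with rfl | hx0
  · simp
  rcases eq_or_ne y 0 with rfl | hy0
  · simp
  have hu1 : ‖((‖x‖⁻¹ : ℝ) : 𝕜) • x‖ = 1 := by rw [RCLike.ofReal_inv, norm_smul_inv_norm hx0]
  have hv1 : ‖((‖y‖⁻¹ : ℝ) : 𝕜) • y‖ = 1 := by rw [RCLike.ofReal_inv, norm_smul_inv_norm hy0]
  have hbound := hA.abs_re_inner_le_of_norm_eq_one (V.smul_mem _ hx) (V.smul_mem _ hy) hu1 hv1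
    (by rw [re_inner_ofReal_smul_ofReal_smul, hxy, mul_zero])
  have hpos : 0 < ‖x‖ * ‖y‖ := by positivity
  rw [map_smul, map_smul, re_inner_ofReal_smul_ofReal_smul, ← mul_inv, abs_mul, abs_inv,
    abs_of_pos hpos, inv_mul_le_iff₀ hpos] at hbound
  linarith

end RestrictedIsometryOn

end RestrictedIsometry

theorem stmt_7_general {n N : ℕ} (M : Matrix (Fin n) (Fin N) ℂ) (δm δp : ℝ)
    (S S' : Finset (Fin N)) (hdisj : Disjoint S S')
    (hrip : ∀ Z : Fin N → ℂ, (∀ i, Z i ≠ 0 → i ∈ S ∪ S') →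
      (1 - δm) * ∑ i, ‖Z i‖ ^ 2 ≤ ∑ k, ‖M.mulVec Z k‖ ^ 2 ∧
        ∑ k, ‖M.mulVec Z k‖ ^ 2 ≤ (1 + δp) * ∑ i, ‖Z i‖ ^ 2) :
    ∀ Z Z' : Fin N → ℂ, (∀ i, Z i ≠ 0 → i ∈ S) → (∀ i, Z' i ≠ 0 → i ∈ S') →
      |(∑ k, starRingEnd ℂ (M.mulVec Z k) * M.mulVec Z' k).re|
        ≤ (1 / 2) * (δp + δm) * Real.sqrt (∑ i, ‖Z i‖ ^ 2) *
            Real.sqrt (∑ i, ‖Z' i‖ ^ 2) := by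
  intro Z Z' hZ hZ'
  set x : EuclideanSpace ℂ (Fin N) := WithLp.toLp 2 Z
  set y : EuclideanSpace ℂ (Fin N) := WithLp.toLp 2 Z'
  have hA : RestrictedIsometryOn (Matrix.toLpLin 2 2 M) (Submodule.span ℂ {x, y}) δm δp := by
    intro z hz
    obtain ⟨a, b, rfl⟩ := Submodule.mem_span_pair.1 hz
    have hsupp : ∀ i, (a • x + b • y).ofLp i ≠ 0 → i ∈ S ∪ S' := by
      intro i hi
      by_cases hi' : Z i = 0
      · exact Finset.mem_union_right _ (hZ' i fun h => hi (by simp [x, y, hi', h]))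
      · exact Finset.mem_union_left _ (hZ i hi')
    simpa only [EuclideanSpace.norm_sq_eq, Matrix.toLpLin_apply] using hrip _ hsupp
  have hxy : ⟪x, y⟫_ℂ = 0 := by
    refine Finset.sum_eq_zero fun i _ => ?_
    by_cases hi : Z i = 0
    · simp [x, hi]
    · have hi' : Z' i = 0 := by_contra fun h => Finset.disjoint_left.1 hdisj (hZ i hi) (hZ' i h)
      simp [y, hi']
  have key := hA.abs_re_inner_le (Submodule.subset_span (Set.mem_insert _ _))
    (Submodule.subset_span (Set.mem_insert_of_mem _ rfl)) (by rw [hxy, map_zero])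
  simp only [PiLp.inner_apply, Matrix.toLpLin_apply, RCLike.inner_apply, RCLike.re_to_complex,
    EuclideanSpace.norm_eq, x, y] at key
  simpa only [mul_comm (starRingEnd ℂ _), one_div_mul_eq_div] using key

/-- RIP on the union of disjoint supports bounds the real part of the inner product:
if `(1-δ⁻)‖Z‖₂² ≤ ‖MZ‖₂² ≤ (1+δ⁺)‖Z‖₂²` for all `Z` supported on `S ∪ S'`, where
`S, S'` are disjoint with `|S| ≤ s`, `|S'| ≤ s'`, then for all `Z` supported on `S`
and `Z'` supported on `S'`,
`|Re⟨MZ, MZ'⟩| ≤ (1/2)(δ⁺ + δ⁻)·‖Z‖₂·‖Z'‖₂`. -/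
theorem stmt_7 {n N : ℕ} (M : Matrix (Fin n) (Fin N) ℂ) (δm δp : ℝ)
    (hδm0 : 0 ≤ δm) (hδm1 : δm ≤ 1) (hδp : 0 ≤ δp)
    (s s' : ℕ) (S S' : Finset (Fin N)) (hdisj : Disjoint S S')
    (hS : S.card ≤ s) (hS' : S'.card ≤ s')
    (hrip : ∀ Z : Fin N → ℂ, (∀ i, Z i ≠ 0 → i ∈ S ∪ S') →
      (1 - δm) * ∑ i, ‖Z i‖ ^ 2 ≤ ∑ k, ‖M.mulVec Z k‖ ^ 2 ∧
        ∑ k, ‖M.mulVec Z k‖ ^ 2 ≤ (1 + δp) * ∑ i, ‖Z i‖ ^ 2) :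
    ∀ Z Z' : Fin N → ℂ, (∀ i, Z i ≠ 0 → i ∈ S) → (∀ i, Z' i ≠ 0 → i ∈ S') →
      |(∑ k, starRingEnd ℂ (M.mulVec Z k) * M.mulVec Z' k).re|
        ≤ (1 / 2) * (δp + δm) * Real.sqrt (∑ i, ‖Z i‖ ^ 2) *
            Real.sqrt (∑ i, ‖Z' i‖ ^ 2) :=
  stmt_7_general M δm δp S S' hdisj hrip
end

section
/- Let Φ̃ ∈ ℂ^{n×N} with unit-norm columns, and suppose it satisfies (1-δ⁻_{S'})‖Z‖₂² ≤ ‖Φ̃Z‖₂² for all Z supported on S' = S ∪ {j} with |S| = s, j ∉ S, and ‖Φ̃Z‖₂² ≤ (1+δ⁺_S)‖Z‖₂² for all Z supported on S. Let P be the orthogonal projection onto the orthogonal complement of span{Φ̃_i : i ∈ S}. Then ‖P Φ̃_j‖₂² ≥ 1 − δ⁻_{S'}(1+δ⁺_S)/(2 + δ⁺_S − δ⁻_{S'}). -/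
open Matrix

/-! Split `M_j = q + p` with `q ∈ span{M_i : i ∈ S}` and `p ⊥ q`, and write `q = M c` with `c`
supported on `S`. Then `p = M (e_j - c)` with `e_j - c` supported on `S ∪ {j}`, so the two RIP
bounds give `‖q‖² ≤ (1 + δ⁺)‖c‖²` and `(1 - δ⁻)(1 + ‖c‖²) ≤ ‖p‖²`; eliminating `‖c‖²` with
`‖p‖² + ‖q‖² = 1` yields the bound. -/

section

variable {𝕜 : Type*} [RCLike 𝕜] {m ι : Type*} [Fintype ι]

theorem exists_mulVec_eq_of_mem_span_cols (M : Matrix m ι 𝕜) (S : Set ι) {x : EuclideanSpace 𝕜 m}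
    (hx : x ∈ Submodule.span 𝕜 {v : EuclideanSpace 𝕜 m | ∃ i ∈ S, v = fun k => M k i}) :
    ∃ c : ι → 𝕜, (∀ i, c i ≠ 0 → i ∈ S) ∧ ⇑x = M *ᵥ c := by
  have hset : {v : EuclideanSpace 𝕜 m | ∃ i ∈ S, v = fun k => M k i}
      = (fun i => WithLp.toLp 2 (M.col i)) '' S := by
    ext v
    exact exists_congr fun i => and_congr_right fun _ => by
      rw [eq_comm, ← (WithLp.ofLp_injective 2).eq_iff]; rfl
  rw [hset, Finsupp.mem_span_image_iff_linearCombination] at hx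
  obtain ⟨l, hlS, rfl⟩ := hx
  refine ⟨l, fun i hi => hlS (Finsupp.mem_support_iff.2 hi), ?_⟩
  ext k
  simp [Finsupp.linearCombination_apply, Finsupp.sum_fintype, WithLp.ofLp_sum, mulVec, dotProduct,
    mul_comm]

theorem sum_norm_sq_single_one_sub [DecidableEq ι] {c : ι → 𝕜} {j : ι} (hcj : c j = 0) :
    ∑ i, ‖(Pi.single j 1 - c : ι → 𝕜) i‖ ^ 2 = 1 + ∑ i, ‖c i‖ ^ 2 := by
  have hterm : ∀ i, ‖(Pi.single j 1 - c : ι → 𝕜) i‖ ^ 2 = ‖c i‖ ^ 2 + if i = j then 1 else 0 := by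
    intro i
    rcases eq_or_ne i j with rfl | hij
    · simp [hcj]
    · simp [hij]
  simp only [hterm, Finset.sum_add_distrib, Finset.sum_ite_eq', Finset.mem_univ, if_true]
  ring

end

theorem mem_insert_of_single_one_sub_ne_zero {R ι : Type*} [Ring R] [DecidableEq ι] {c : ι → R}
    {S : Finset ι} (hcS : ∀ i, c i ≠ 0 → i ∈ S) (j : ι) {i : ι}
    (hi : (Pi.single j 1 - c : ι → R) i ≠ 0) : i ∈ insert j S := by
  rcases eq_or_ne i j with rfl | hij
  · exact Finset.mem_insert_self i S
  · exact Finset.mem_insert_of_mem (hcS i (by simpa [hij] using hi))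

theorem le_of_rip_bounds {x C δm δp : ℝ} (hδm : δm < 1) (hδp : 0 ≤ δp)
    (hupper : 1 - x ≤ (1 + δp) * C) (hlower : (1 - δm) * (1 + C) ≤ x) :
    1 - δm * (1 + δp) / (2 + δp - δm) ≤ x := by
  rw [sub_le_iff_le_add, ← sub_le_iff_le_add', le_div_iff₀ (by linarith)]
  nlinarith [mul_le_mul_of_nonneg_left hlower (by linarith : (0 : ℝ) ≤ 1 + δp),
    mul_le_mul_of_nonneg_left hupper (by linarith : (0 : ℝ) ≤ 1 - δm)]

theorem stmt_12_general {n N : ℕ} (M : Matrix (Fin n) (Fin N) ℂ)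
    (δm δp : ℝ) (hδm1 : δm < 1) (hδp : 0 ≤ δp)
    (S : Finset (Fin N)) (j : Fin N) (hjS : j ∉ S)
    (hcol : ∀ i : Fin N, ∑ k, ‖M k i‖ ^ 2 = 1)
    (hlow : ∀ Z : Fin N → ℂ, (∀ i, Z i ≠ 0 → i ∈ insert j S) →
      (1 - δm) * ∑ i, ‖Z i‖ ^ 2 ≤ ∑ k, ‖M.mulVec Z k‖ ^ 2)
    (hup : ∀ Z : Fin N → ℂ, (∀ i, Z i ≠ 0 → i ∈ S) →
      ∑ k, ‖M.mulVec Z k‖ ^ 2 ≤ (1 + δp) * ∑ i, ‖Z i‖ ^ 2)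
    (K : Submodule ℂ (EuclideanSpace ℂ (Fin n)))
    (hK : K = Submodule.span ℂ
      {v : EuclideanSpace ℂ (Fin n) | ∃ i ∈ S, v = fun k => M k i}) :
    1 - δm * (1 + δp) / (2 + δp - δm)
      ≤ ‖(Kᗮ.orthogonalProjection (WithLp.toLp 2 (fun k => M k j)) : EuclideanSpace ℂ (Fin n))‖ ^ 2 := by
  classical
  set φ : EuclideanSpace ℂ (Fin n) := WithLp.toLp 2 (fun k => M k j)
  set q := K.starProjection φ
  set p := Kᗮ.starProjection φ
  show _ ≤ ‖p‖ ^ 2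
  have hqK : q ∈ K := K.starProjection_apply_mem φ
  rw [hK] at hqK
  obtain ⟨c, hcS, hqc⟩ := exists_mulVec_eq_of_mem_span_cols M (S : Set (Fin N)) hqK
  have hcj : c j = 0 := not_not.1 (mt (hcS j) hjS)
  have hpc : ⇑p = M *ᵥ (Pi.single j 1 - c) := by
    rw [mulVec_sub, mulVec_single_one, ← hqc, eq_sub_iff_add_eq', ← WithLp.ofLp_add]
    exact congrArg WithLp.ofLp (K.starProjection_add_starProjection_orthogonal φ)
  have hpq : ‖q‖ ^ 2 + ‖p‖ ^ 2 = 1 := by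
    rw [← hcol j, ← EuclideanSpace.norm_sq_eq φ]
    exact (Submodule.norm_sq_eq_add_norm_sq_projection φ K).symm
  refine le_of_rip_bounds (C := ∑ i, ‖c i‖ ^ 2) hδm1 hδp ?_ ?_
  · calc 1 - ‖p‖ ^ 2 = ∑ k, ‖(M *ᵥ c) k‖ ^ 2 := by rw [← hqc, ← EuclideanSpace.norm_sq_eq]; linarith
      _ ≤ (1 + δp) * ∑ i, ‖c i‖ ^ 2 := hup c hcS
  · rw [← sum_norm_sq_single_one_sub hcj, EuclideanSpace.norm_sq_eq, hpc]
    exact hlow _ fun i => mem_insert_of_single_one_sub_ne_zero hcS j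

/-- Lower bound on the component of a column outside the span of the support columns:
if `M ∈ ℂ^{n×N}` has unit-norm columns, satisfies the lower RIP bound with constant
`δ⁻` on `S' = S ∪ {j}` (`|S| = s`, `j ∉ S`) and the upper RIP bound with constant
`δ⁺` on `S`, and `P` is the orthogonal projection onto the orthogonal complement of
`span{M_i : i ∈ S}`, then `‖P M_j‖₂² ≥ 1 − δ⁻(1+δ⁺)/(2 + δ⁺ − δ⁻)`. -/
theorem stmt_12 {n N : ℕ} (M : Matrix (Fin n) (Fin N) ℂ) (s : ℕ)
    (δm δp : ℝ) (hδm0 : 0 ≤ δm) (hδm1 : δm < 1) (hδp : 0 ≤ δp)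
    (S : Finset (Fin N)) (j : Fin N) (hjS : j ∉ S) (hcard : S.card = s)
    (hcol : ∀ i : Fin N, ∑ k, ‖M k i‖ ^ 2 = 1)
    (hlow : ∀ Z : Fin N → ℂ, (∀ i, Z i ≠ 0 → i ∈ insert j S) →
      (1 - δm) * ∑ i, ‖Z i‖ ^ 2 ≤ ∑ k, ‖M.mulVec Z k‖ ^ 2)
    (hup : ∀ Z : Fin N → ℂ, (∀ i, Z i ≠ 0 → i ∈ S) →
      ∑ k, ‖M.mulVec Z k‖ ^ 2 ≤ (1 + δp) * ∑ i, ‖Z i‖ ^ 2)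
    (K : Submodule ℂ (EuclideanSpace ℂ (Fin n)))
    (hK : K = Submodule.span ℂ
      {v : EuclideanSpace ℂ (Fin n) | ∃ i ∈ S, v = fun k => M k i}) :
    1 - δm * (1 + δp) / (2 + δp - δm)
      ≤ ‖(Kᗮ.orthogonalProjection (WithLp.toLp 2 (fun k => M k j)) : EuclideanSpace ℂ (Fin n))‖ ^ 2 :=
  stmt_12_general M δm δp hδm1 hδp S j hjS hcol hlow hup K hK
end
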